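/- (Effect of shuffling labels.) Let D⁰ = {x⁰₊ₖ, x⁰₋ₖ}ₖ₌₁^K and D¹ = {x¹₊ₖ, x¹₋ₖ}ₖ₌₁^K be two K-shot task datasets, and suppose the class-to-label assignment in D¹ is swapped: in L_{D¹} the positive samples x¹₊ₖ carry label (0,1) and the negative samples x¹₋ₖ carry label (1,0), while D⁰ keeps the standard assignment. If η₀ = η₁, then ∇_{η₀}(L_{D⁰} − L_{D¹}) = −(1/(2K)) Σₖ₌₁^K ( D_ω (x̄⁰₊ₖ − x̄⁰₋ₖ) + D_ω (x̄¹₊ₖ − x̄¹₋ₖ) ). In particular, the differences appearing in the gradient are between positive and negative samples within each task, rather than between the near-identical backgrounds of corresponding samples across tasks. -/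

import Mathlib

open scoped InnerProductSpace

/-- Binary softmax, first component. -/
noncomputable def p0 (u0 u1 : ℝ) : ℝ := Real.exp u0 / (Real.exp u0 + Real.exp u1)

/-- Binary softmax, second component. -/
noncomputable def p1 (u0 u1 : ℝ) : ℝ := Real.exp u1 / (Real.exp u0 + Real.exp u1)

/-- Cross-entropy loss ℓ(u; y) = −y₀ log p₀(u) − y₁ log p₁(u), with label (y0, y1)
and logits (u0, u1). -/
noncomputable def xent (y0 y1 u0 u1 : ℝ) : ℝ :=
  -(y0 * Real.log (p0 u0 u1)) - y1 * Real.log (p1 u0 u1)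

/-- The valid index l + a ∈ Fin L, for l ∈ Fin (L−M+1) and a ∈ Fin M with M ≤ L. -/
def idx {L M : ℕ} (hL : M ≤ L) (l : Fin (L - M + 1)) (a : Fin M) : Fin L :=
  ⟨l.val + a.val, by have h1 := l.isLt; have h2 := a.isLt; omega⟩

/-- Row-major flattening of an L×L image, indexed by pairs. -/
def flat {L : ℕ} (x : Fin L → Fin L → ℝ) : EuclideanSpace ℝ (Fin L × Fin L) :=
  WithLp.toLp 2 (fun m => x m.1 m.2)

/-- The sparse Toeplitz matrix D_ω representing the valid convolution with filter ω. -/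
noncomputable def Dmat {L M : ℕ} (hM : 1 ≤ M) (hL : M ≤ L) (ω : Fin M × Fin M → ℝ) :
    Matrix (Fin (L - M + 1) × Fin (L - M + 1)) (Fin L × Fin L) ℝ :=
  fun l m =>
    if h : l.1.val ≤ m.1.val ∧ m.1.val - l.1.val ≤ M - 1 ∧
        l.2.val ≤ m.2.val ∧ m.2.val - l.2.val ≤ M - 1 then
      ω (⟨m.1.val - l.1.val, by omega⟩, ⟨m.2.val - l.2.val, by omega⟩)
    else 0

/-- The flattened feature map z̄(x) = D_ω x̄. -/
noncomputable def zbar {L M : ℕ} (hM : 1 ≤ M) (hL : M ≤ L) (ω : Fin M × Fin M → ℝ)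
    (x : Fin L → Fin L → ℝ) : EuclideanSpace ℝ (Fin (L - M + 1) × Fin (L - M + 1)) :=
  WithLp.toLp 2 ((Dmat hM hL ω).mulVec (flat x))

/-- Task loss of a K-shot dataset with positive samples xp (label (1,0)) and negative
samples xm (label (0,1)): L_D = (1/K) Σₖ ( ℓ(xpₖ; (1,0)) + ℓ(xmₖ; (0,1)) ), where the
logits of a sample x are (η₀·z̄(x), η₁·z̄(x)). -/
noncomputable def taskLoss {L M K : ℕ} (hM : 1 ≤ M) (hL : M ≤ L) (ω : Fin M × Fin M → ℝ)
    (xp xm : Fin K → Fin L → Fin L → ℝ)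
    (η0 η1 : EuclideanSpace ℝ (Fin (L - M + 1) × Fin (L - M + 1))) : ℝ :=
  (1 / (K : ℝ)) * ∑ k : Fin K,
    (xent 1 0 ⟪η0, zbar hM hL ω (xp k)⟫_ℝ ⟪η1, zbar hM hL ω (xp k)⟫_ℝ +
     xent 0 1 ⟪η0, zbar hM hL ω (xm k)⟫_ℝ ⟪η1, zbar hM hL ω (xm k)⟫_ℝ)

/-- Task loss under the swapped class-to-label assignment: positive samples xp carry
label (0,1) and negative samples xm carry label (1,0). -/
noncomputable def taskLossSwapped {L M K : ℕ} (hM : 1 ≤ M) (hL : M ≤ L)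
    (ω : Fin M × Fin M → ℝ) (xp xm : Fin K → Fin L → Fin L → ℝ)
    (η0 η1 : EuclideanSpace ℝ (Fin (L - M + 1) × Fin (L - M + 1))) : ℝ :=
  (1 / (K : ℝ)) * ∑ k : Fin K,
    (xent 0 1 ⟪η0, zbar hM hL ω (xp k)⟫_ℝ ⟪η1, zbar hM hL ω (xp k)⟫_ℝ +
     xent 1 0 ⟪η0, zbar hM hL ω (xm k)⟫_ℝ ⟪η1, zbar hM hL ω (xm k)⟫_ℝ)

/-!
Cross-entropy with label `y` has derivative `(y₀ + y₁) p₀ - y₀` in the first logit. When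
`η₀ = η₁` every sample sees equal logits, so `p₀ = 1/2` and the `η₀`-gradient of a sample with
feature `z` is `((y₁ - y₀) / 2) • z`, i.e. `∓ z / 2`. Swapping the labels flips all these signs,
so both task gradients are multiples of the within-task sums `∑ₖ (z̄(x₊ₖ) - z̄(x₋ₖ))`, and these
add up in the difference of the losses.
-/

open Real

theorem xent_eq (y0 y1 u c : ℝ) :
    xent y0 y1 u c = (y0 + y1) * log (exp u + exp c) - y0 * u - y1 * c := by
  have hpos : 0 < exp u + exp c := by positivity
  rw [xent, p0, p1, log_div (exp_ne_zero _) hpos.ne', log_div (exp_ne_zero _) hpos.ne',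
    log_exp, log_exp]
  ring

theorem hasDerivAt_xent_left (y0 y1 c t : ℝ) :
    HasDerivAt (fun u => xent y0 y1 u c) ((y0 + y1) * p0 t c - y0) t := by
  simp only [xent_eq]
  have hlog : HasDerivAt (fun u => log (exp u + exp c)) (p0 t c) t :=
    ((hasDerivAt_exp t).add_const _).log (by positivity)
  simpa using ((hlog.const_mul (y0 + y1)).sub ((hasDerivAt_id t).const_mul y0)).sub_const (y1 * c)

theorem p0_self (t : ℝ) : p0 t t = 1 / 2 := by
  rw [p0, div_eq_iff (by positivity)]
  ring

section Gradient

variable {𝕜 F : Type*} [RCLike 𝕜] [NormedAddCommGroup F] [InnerProductSpace 𝕜 F]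
  [CompleteSpace F] {f g : F → 𝕜} {f' g' x : F}

theorem HasGradientAt.add (hf : HasGradientAt f f' x) (hg : HasGradientAt g g' x) :
    HasGradientAt (fun y => f y + g y) (f' + g') x := by
  rw [hasGradientAt_iff_hasFDerivAt] at *
  simpa only [map_add] using hf.fun_add hg

theorem HasGradientAt.sub (hf : HasGradientAt f f' x) (hg : HasGradientAt g g' x) :
    HasGradientAt (fun y => f y - g y) (f' - g') x := by
  rw [hasGradientAt_iff_hasFDerivAt] at *
  simpa only [map_sub] using hf.fun_sub hg

theorem HasGradientAt.sum {ι : Type*} {s : Finset ι} {A : ι → F → 𝕜} {A' : ι → F}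
    (h : ∀ i ∈ s, HasGradientAt (A i) (A' i) x) :
    HasGradientAt (fun y => ∑ i ∈ s, A i y) (∑ i ∈ s, A' i) x := by
  rw [hasGradientAt_iff_hasFDerivAt, map_sum]
  exact HasFDerivAt.fun_sum fun i hi => hasGradientAt_iff_hasFDerivAt.mp (h i hi)

end Gradient

section RealGradient

variable {F : Type*} [NormedAddCommGroup F] [InnerProductSpace ℝ F] [CompleteSpace F]
  {f : F → ℝ} {f' x : F}

theorem HasGradientAt.const_mul (a : ℝ) (hf : HasGradientAt f f' x) :
    HasGradientAt (fun y => a * f y) (a • f') x := by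
  rw [hasGradientAt_iff_hasFDerivAt] at *
  simpa only [map_smul] using hf.const_mul a

theorem HasDerivAt.hasGradientAt_comp_inner {φ : ℝ → ℝ} {φ' : ℝ} (z : F)
    (hφ : HasDerivAt φ φ' ⟪x, z⟫_ℝ) : HasGradientAt (fun y => φ ⟪y, z⟫_ℝ) (φ' • z) x := by
  have hz : HasFDerivAt (fun y : F => ⟪y, z⟫_ℝ) (innerSL ℝ z) x := by
    convert (innerSL ℝ z).hasFDerivAt using 1
    ext y
    simp [real_inner_comm]
  rw [hasGradientAt_iff_hasFDerivAt]
  refine (hφ.comp_hasFDerivAt x hz).congr_fderiv ?_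
  ext w
  simp

theorem hasGradientAt_xent_inner (y0 y1 : ℝ) (z η : F) :
    HasGradientAt (fun e => xent y0 y1 ⟪e, z⟫_ℝ ⟪η, z⟫_ℝ) (((y1 - y0) / 2) • z) η := by
  have h := (hasDerivAt_xent_left y0 y1 ⟪η, z⟫_ℝ ⟪η, z⟫_ℝ).hasGradientAt_comp_inner z
  rwa [p0_self, show (y0 + y1) * (1 / 2) - y0 = (y1 - y0) / 2 by ring] at h

theorem hasGradientAt_mean_xent_swap {K : ℕ} (a b : ℝ) (zp zm : Fin K → F) (η : F) :
    HasGradientAt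
      (fun e => (1 / (K : ℝ)) * ∑ k,
        (xent a b ⟪e, zp k⟫_ℝ ⟪η, zp k⟫_ℝ + xent b a ⟪e, zm k⟫_ℝ ⟪η, zm k⟫_ℝ))
      (((b - a) / (2 * K)) • ∑ k, (zp k - zm k)) η := by
  convert (HasGradientAt.sum (s := Finset.univ) fun k _ =>
    (hasGradientAt_xent_inner a b (zp k) η).add
      (hasGradientAt_xent_inner b a (zm k) η)).const_mul (1 / (K : ℝ)) using 1
  simp only [Finset.smul_sum]
  refine Finset.sum_congr rfl fun k _ => ?_
  module

end RealGradient

theorem zbar_sub {L M : ℕ} (hM : 1 ≤ M) (hL : M ≤ L) (ω : Fin M × Fin M → ℝ)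
    (a b : Fin L → Fin L → ℝ) :
    zbar hM hL ω (fun i j => a i j - b i j) = zbar hM hL ω a - zbar hM hL ω b := by
  ext l
  simp [zbar, flat, Matrix.mulVec, dotProduct, mul_sub, Finset.sum_sub_distrib]

section TaskLoss

variable {L M K : ℕ} (hM : 1 ≤ M) (hL : M ≤ L) (ω : Fin M × Fin M → ℝ)
  (xp xm : Fin K → Fin L → Fin L → ℝ) (η : EuclideanSpace ℝ (Fin (L - M + 1) × Fin (L - M + 1)))

theorem hasGradientAt_taskLoss_left :
    HasGradientAt (fun e => taskLoss hM hL ω xp xm e η)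
      ((-1 / (2 * K) : ℝ) • ∑ k, zbar hM hL ω (fun i j => xp k i j - xm k i j)) η := by
  have h := hasGradientAt_mean_xent_swap 1 0 (fun k => zbar hM hL ω (xp k))
    (fun k => zbar hM hL ω (xm k)) η
  rw [zero_sub] at h
  simp only [zbar_sub]
  exact h

theorem hasGradientAt_taskLossSwapped_left :
    HasGradientAt (fun e => taskLossSwapped hM hL ω xp xm e η)
      ((1 / (2 * K) : ℝ) • ∑ k, zbar hM hL ω (fun i j => xp k i j - xm k i j)) η := by
  have h := hasGradientAt_mean_xent_swap 0 1 (fun k => zbar hM hL ω (xp k))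
    (fun k => zbar hM hL ω (xm k)) η
  rw [sub_zero] at h
  simp only [zbar_sub]
  exact h

end TaskLoss

/-- Effect of shuffling labels: if D¹ uses the swapped label assignment while D⁰ keeps
the standard one, and η₀ = η₁, then
∇_{η₀}(L_{D⁰} − L_{D¹}) = −(1/(2K)) Σₖ ( D_ω(x̄⁰₊ₖ − x̄⁰₋ₖ) + D_ω(x̄¹₊ₖ − x̄¹₋ₖ) ). -/
theorem shuffled_grad (L M K : ℕ) (hM : 1 ≤ M) (hL : M ≤ L)
    (ω : Fin M × Fin M → ℝ)
    (x0p x0m x1p x1m : Fin K → Fin L → Fin L → ℝ)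
    (η0 η1 : EuclideanSpace ℝ (Fin (L - M + 1) × Fin (L - M + 1)))
    (h : η0 = η1) :
    gradient (fun e : EuclideanSpace ℝ (Fin (L - M + 1) × Fin (L - M + 1)) =>
        taskLoss hM hL ω x0p x0m e η1 - taskLossSwapped hM hL ω x1p x1m e η1) η0 =
      (-(1 / (2 * (K : ℝ)))) • ∑ k : Fin K,
        (zbar hM hL ω (fun i j => x0p k i j - x0m k i j) +
         zbar hM hL ω (fun i j => x1p k i j - x1m k i j)) := by
  subst h
  rw [((hasGradientAt_taskLoss_left hM hL ω x0p x0m η0).sub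
    (hasGradientAt_taskLossSwapped_left hM hL ω x1p x1m η0)).gradient, Finset.sum_add_distrib]
  module
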